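/- Every continuous polynomial map f : ℝ_{≥0}^N → ℝ of degree ≤ d (where ℝ_{≥0}^N is the additive semigroup of N-tuples of nonnegative reals under componentwise addition) is a polynomial in N variables of total degree ≤ d in the usual sense: f agrees on ℝ_{≥0}^N with a real polynomial function in the coordinates t₁, …, t_N of total degree ≤ d. -/

import Mathlib

/-!
On `ℕ^N`, Newton's forward-difference formula in the first coordinate reads
`u (n, k') = ∑_{j ≤ d} C(n, j) • Δ^j u (0, k')`, with `k' ↦ Δ^j u (0, k')` of degree `≤ d - j`;
by induction on `N`, a map of degree `≤ d` on `ℕ^N` is a polynomial of total degree `≤ d`.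
Applied to `k ↦ f (k / m)` and rescaled, this gives a polynomial agreeing with `f` on
`(1/m) ℕ^N`. It is the one obtained for `m = 1`, as both agree on `ℕ^N` and a polynomial is
determined by its values there. So `f` is a polynomial on a dense set, and continuity finishes.
-/

namespace PaperPoly

/-- `ADegLE d f` means that `f : S → G`, from an additive commutative semigroup to an
additive commutative group, is a polynomial map of degree at most `d ∈ ℕ`: the base case
`ADegLE 0 f` means `f` is constant, and `ADegLE (d+1) f` means that for every `s : S` the
difference map `D_s f : t ↦ f (s+t) - f t` satisfies `ADegLE d`. -/
def ADegLE {S : Type*} [AddCommSemigroup S] {G : Type*} [AddCommGroup G] :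
    ℕ → (S → G) → Prop
  | 0 => fun f => ∀ t t' : S, f t = f t'
  | d + 1 => fun f => ∀ s : S, ADegLE d (fun t => f (s + t) - f t)

end PaperPoly

open MvPolynomial Finset
open scoped fwdDiff NNReal Nat

theorem Polynomial.totalDegree_toMvPolynomial_le {R σ : Type*} [CommSemiring R] (p : Polynomial R)
    (i : σ) : (p.toMvPolynomial i).totalDegree ≤ p.natDegree := by
  conv_lhs => rw [p.as_sum_range_C_mul_X_pow, map_sum]
  refine (totalDegree_finsetSum _ _).trans (Finset.sup_le fun j hj => ?_)
  rw [map_mul, map_pow, Polynomial.toMvPolynomial_C, Polynomial.toMvPolynomial_X,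
    MvPolynomial.C_mul_X_pow_eq_monomial]
  refine (totalDegree_monomial_le _ _).trans ?_
  simpa [Nat.lt_succ_iff] using hj

namespace MvPolynomial

theorem eval_bind₁_C_mul_X {R σ : Type*} [CommSemiring R] (c : R)
    (p : MvPolynomial σ R) (x : σ → R) :
    eval x (bind₁ (fun i => C c * X i) p) = eval (fun i => c * x i) p := by
  induction p using MvPolynomial.induction_on <;> simp_all

theorem eq_of_forall_eval_natCast_eq {R σ : Type*} [CommRing R] [IsDomain R]
    [CharZero R] {p q : MvPolynomial σ R}
    (h : ∀ k : σ → ℕ, eval (fun i => (k i : R)) p = eval (fun i => (k i : R)) q) : p = q :=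
  funext_set (fun _ => Set.range Nat.cast)
    (fun _ => Set.infinite_range_of_injective Nat.cast_injective) fun x hx => by
      choose k hk using fun i => hx i trivial
      obtain rfl : (fun i => (k i : R)) = x := _root_.funext hk
      exact h k

end MvPolynomial

namespace PaperPoly

section Difference

variable {S T M G : Type*} [AddCommSemigroup S] [AddCommSemigroup T] [AddCommMonoid M]
  [AddCommGroup G] {d : ℕ}

theorem ADegLE.comp {F : Type*} [FunLike F T S] [AddHomClass F T S] {f : S → G}
    (hf : ADegLE d f) (g : F) : ADegLE d (f ∘ g) := by
  induction d generalizing f with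
  | zero => exact fun t t' => hf _ _
  | succ d ih => exact fun s => by simpa [Function.comp_def] using ih (hf (g s))

theorem ADegLE.fwdDiff {f : M → G} (hf : ADegLE d f) (h : M) : ADegLE (d - 1) (Δ_[h] f) := by
  cases d with
  | zero =>
    intro t t'
    rw [_root_.fwdDiff, hf (t + h) t, sub_self, _root_.fwdDiff, hf (t' + h) t', sub_self]
  | succ d =>
    show ADegLE d fun t => f (t + h) - f t
    simpa only [add_comm h] using hf h

theorem ADegLE.fwdDiff_iter {f : M → G} (hf : ADegLE d f) (h : M) (j : ℕ) :
    ADegLE (d - j) (Δ_[h] ^[j] f) := by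
  induction j with
  | zero => exact hf
  | succ j ih => rw [Function.iterate_succ_apply', ← Nat.sub_sub]; exact ih.fwdDiff h

theorem ADegLE.fwdDiff_iter_eq_zero {f : M → G} (hf : ADegLE d f) (h : M) {j : ℕ} (hj : d < j) :
    Δ_[h] ^[j] f = 0 := by
  obtain ⟨i, rfl⟩ := Nat.exists_eq_add_of_lt hj
  have hconst : ADegLE 0 (Δ_[h] ^[d] f) := by simpa using hf.fwdDiff_iter h d
  have hzero : Δ_[h] ^[d + 1] f = 0 := by
    ext t
    rw [Function.iterate_succ_apply', _root_.fwdDiff, hconst (t + h) t, sub_self, Pi.zero_apply]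
  rw [add_comm d i, add_assoc, Function.iterate_add_apply, hzero]
  exact Function.iterate_fixed (fwdDiff_const h 0) i

theorem ADegLE.eq_sum_fwdDiff_iter {f : M → G} (hf : ADegLE d f) (h y : M) (n : ℕ) :
    f (y + n • h) = ∑ j ∈ range (d + 1), n.choose j • Δ_[h] ^[j] f y := by
  have hsub : ∀ m ≤ max n d, range (m + 1) ⊆ range (max n d + 1) := fun m hm =>
    range_subset_range.2 (by omega)
  rw [shift_eq_sum_fwdDiff_iter h f n y, sum_subset (hsub n (le_max_left n d)),
    sum_subset (hsub d (le_max_right n d))]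
  · intro j _ hj
    rw [hf.fwdDiff_iter_eq_zero h (by simpa using hj), Pi.zero_apply, smul_zero]
  · intro j _ hj
    rw [Nat.choose_eq_zero_of_lt (by simpa using hj), zero_smul]

end Difference

section BinomialPolynomial

variable (K : Type*) [Field K]

noncomputable def binomialPolynomial (j : ℕ) : Polynomial K :=
  (j ! : K)⁻¹ • descPochhammer K j

variable {K}

theorem natDegree_binomialPolynomial_le (j : ℕ) : (binomialPolynomial K j).natDegree ≤ j :=
  (Polynomial.natDegree_smul_le _ _).trans (descPochhammer_natDegree K j).le

theorem eval_natCast_binomialPolynomial [CharZero K] (j n : ℕ) :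
    (binomialPolynomial K j).eval (n : K) = n.choose j := by
  rw [binomialPolynomial, Polynomial.eval_smul, descPochhammer_eval_eq_descFactorial,
    Nat.descFactorial_eq_factorial_mul_choose, Nat.cast_mul, smul_eq_mul,
    inv_mul_cancel_left₀ (Nat.cast_ne_zero.2 j.factorial_ne_zero)]

end BinomialPolynomial

theorem ADegLE.exists_mvPolynomial {K : Type*} [Field K] [CharZero K] :
    ∀ {N d : ℕ} {u : (Fin N → ℕ) → K}, ADegLE d u →
      ∃ p : MvPolynomial (Fin N) K, p.totalDegree ≤ d ∧
        ∀ k, u k = eval (fun i => (k i : K)) p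
  | 0, d, u, _ => ⟨C (u 0), by simp, fun k => by rw [Subsingleton.elim k 0, eval_C]⟩
  | N + 1, d, u, hu => by
    let consZero : (Fin N → ℕ) →ₙ+ (Fin (N + 1) → ℕ) :=
      ⟨fun k => Fin.cons 0 k, fun a b => by ext i; cases i using Fin.cases <;> simp⟩
    choose q hq_deg hq using fun j =>
      exists_mvPolynomial ((hu.fwdDiff_iter (Pi.single 0 1) j).comp consZero)
    refine ⟨∑ j ∈ range (d + 1),
      (binomialPolynomial K j).toMvPolynomial 0 * rename Fin.succ (q j), ?_, ?_⟩
    · refine (totalDegree_finsetSum _ _).trans (Finset.sup_le fun j hj => ?_)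
      grw [totalDegree_mul, Polynomial.totalDegree_toMvPolynomial_le,
        natDegree_binomialPolynomial_le, totalDegree_rename_le, hq_deg]
      simp only [mem_range] at hj
      omega
    · intro k
      obtain ⟨n, k, rfl⟩ : ∃ n k', k = Fin.cons n k' :=
        ⟨k 0, Fin.tail k, (Fin.cons_self_tail k).symm⟩
      have hk : (Fin.cons n k : Fin (N + 1) → ℕ) = Fin.cons 0 k + n • Pi.single 0 1 := by
        ext i; cases i using Fin.cases <;> simp
      rw [hk, hu.eq_sum_fwdDiff_iter, map_sum]
      refine sum_congr rfl fun j _ => ?_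
      rw [map_mul, eval_toMvPolynomial, eval_rename, ← hk]
      simp [Function.comp_def, eval_natCast_binomialPolynomial, ← hq, consZero]

theorem ADegLE.eq_eval_natCast_div_of_eq_eval_natCast {N d : ℕ} {f : (Fin N → ℝ≥0) → ℝ}
    (hf : ADegLE d f)
    {p : MvPolynomial (Fin N) ℝ}
    (hp : ∀ k : Fin N → ℕ, f (fun i => k i) = eval (fun i => (k i : ℝ)) p)
    {m : ℕ} (hm : m ≠ 0) (k : Fin N → ℕ) :
    f (fun i => k i / m) = eval (fun i => ((k i / m : ℝ≥0) : ℝ)) p := by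
  let divNat : (Fin N → ℕ) →ₙ+ (Fin N → ℝ≥0) :=
    ⟨fun k i => k i / m, fun a b => by ext i; simp [add_div]⟩
  obtain ⟨q, -, hq⟩ := (hf.comp divNat).exists_mvPolynomial
  have hqp : bind₁ (fun i => C (m : ℝ) * X i) q = p := eq_of_forall_eval_natCast_eq fun k => by
    rw [eval_bind₁_C_mul_X, ← hp]
    simpa [divNat, hm] using (hq (fun i => m * k i)).symm
  rw [← hqp, eval_bind₁_C_mul_X]
  simpa [divNat, mul_div_cancel₀, hm] using hq k

theorem dense_natCast_div (N : ℕ) :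
    Dense {x : Fin N → ℝ≥0 |
      ∃ m : ℕ, m ≠ 0 ∧ ∃ k : Fin N → ℕ, x = fun i => (k i : ℝ≥0) / m} := by
  intro t
  refine mem_closure_of_tendsto (b := Filter.atTop)
    (f := fun m : ℕ => fun i => (⌊(t i : ℝ) * m⌋₊ : ℝ≥0) / m) ?_ ?_
  · rw [tendsto_pi_nhds]
    intro i
    rw [← NNReal.tendsto_coe]
    push_cast
    exact (tendsto_nat_floor_mul_div_atTop (t i).2).comp tendsto_natCast_atTop_atTop
  · filter_upwards [Filter.eventually_ne_atTop 0] with m hm using ⟨m, hm, _, rfl⟩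

/-- Every continuous polynomial map `f : ℝ_{≥0}^N → ℝ` of degree `≤ d` is a polynomial in
`N` variables of total degree `≤ d` in the usual sense: `f` agrees on `ℝ_{≥0}^N` with a
real polynomial function in the coordinates of total degree `≤ d`. -/
theorem continuous_polynomial_map_real_multivariate (N : ℕ)
    (f : (Fin N → NNReal) → ℝ) (d : ℕ) (hf : ADegLE d f) (hcont : Continuous f) :
    ∃ p : MvPolynomial (Fin N) ℝ, p.totalDegree ≤ d ∧
      ∀ t : Fin N → NNReal, f t = MvPolynomial.eval (fun i => (t i : ℝ)) p := by
  obtain ⟨p, hp_deg, hp⟩ :=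
    (hf.comp ((Nat.castAddMonoidHom ℝ≥0).compLeft (Fin N))).exists_mvPolynomial
  refine ⟨p, hp_deg, congrFun (Continuous.ext_on (dense_natCast_div N) hcont
    ((continuous_eval p).comp (by fun_prop)) ?_)⟩
  rintro _ ⟨m, hm, k, rfl⟩
  exact hf.eq_eval_natCast_div_of_eq_eval_natCast hp hm k

end PaperPoly
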